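/- arXiv:0807.1679 — 3 statements merged into one kernel-verified Lean document; each statement's English description precedes it below -/
import Mathlib

section
/- Let n ≥ 1 and let A be a nonempty subset of {0,1}^n. Then |∂*A| ≥ 4n · (1/2 − √(H⁻¹(log|A|/n)·(1 − H⁻¹(log|A|/n)))) · |A|/2^n. -/
/-!
Expanding the square, `cubeD2 n f = (2n ∑ f² - 2 crossSum n f) / 2ⁿ`, so it suffices to bound the
cross term `∑ₓ ∑_{y ∼ x} f x f y` of a function supported on `A`.

If `λ, c ≥ 0` satisfy `(c - λ log u) (c - λ log (1 - u)) ≥ 1` on `(0, 1)`, then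
`crossSum n f ≤ (λ log |A| + c n) ∑ f²`, by induction on `n`: split the cube along the first
coordinate into halves `A₀, A₁`; the cross term between the halves is absorbed by Cauchy–Schwarz
and AM–GM, the hypothesis being applied at `u = |A₀| / |A|`.

For `h = H⁻¹(log |A| / n)` one picks `λ, c` with `λ H(h) + c = 2 √(h (1 - h))` such that the
product equals `1` at `u = h` with vanishing derivative there; then
`λ log |A| + c n = 2n √(h (1 - h))`.
The product is `≥ 1` everywhere because its derivative has the sign of
`u (c - λ log u) - (1 - u) (c - λ log (1 - u))`, which is concave on `[0, 1/2]` and vanishes at `h`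
and at `1/2`.
-/

/-- Expectation of `g` over the uniform measure on the Hamming cube `{0,1}^n`. -/
noncomputable def cubeE (n : ℕ) (g : (Fin n → Bool) → ℝ) : ℝ :=
  (∑ x : Fin n → Bool, g x) / 2 ^ n

/-- `E_x ∑_{y ∼ x} (f x - f y)^2` on the Hamming cube `{0,1}^n`. -/
noncomputable def cubeD2 (n : ℕ) (f : (Fin n → Bool) → ℝ) : ℝ :=
  cubeE n (fun x => ∑ i : Fin n, (f x - f (Function.update x i (!x i))) ^ 2)

/-- `Ent(f²) = E[f² log f²] - E[f²] log E[f²]` (note `Real.log 0 = 0`). -/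
noncomputable def cubeEnt (n : ℕ) (f : (Fin n → Bool) → ℝ) : ℝ :=
  cubeE n (fun x => f x ^ 2 * Real.log (f x ^ 2)) -
    cubeE n (fun x => f x ^ 2) * Real.log (cubeE n (fun x => f x ^ 2))

/-- The fractional edge-boundary size of `A ⊆ {0,1}^n`:
`|∂*A| = inf { E_x ∑_{y∼x} (f x − f y)² : supp f ⊆ A, E[f²] = |A|/2^n }`. -/
noncomputable def fracBoundary (n : ℕ) (A : Finset (Fin n → Bool)) : ℝ :=
  sInf {v : ℝ | ∃ f : (Fin n → Bool) → ℝ,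
    (∀ x, x ∉ A → f x = 0) ∧
    cubeE n (fun x => f x ^ 2) = (A.card : ℝ) / 2 ^ n ∧
    v = cubeD2 n f}

open Real Finset

def crossSum (n : ℕ) (f : (Fin n → Bool) → ℝ) : ℝ :=
  ∑ x, ∑ i, f x * f (Function.update x i (!x i))

theorem update_not_involutive {n : ℕ} (i : Fin n) :
    Function.Involutive fun x : Fin n → Bool => Function.update x i (!x i) :=
  fun x => by simp

theorem sum_comp_update_not {n : ℕ} (i : Fin n) (F : (Fin n → Bool) → ℝ) :
    ∑ x, F (Function.update x i (!x i)) = ∑ x, F x :=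
  Equiv.sum_comp ((update_not_involutive i).toPerm _) F

theorem cubeD2_eq (n : ℕ) (f : (Fin n → Bool) → ℝ) :
    cubeD2 n f = (2 * n * ∑ x, f x ^ 2 - 2 * crossSum n f) / 2 ^ n := by
  have hflip : ∑ x, ∑ i : Fin n, f (Function.update x i (!x i)) ^ 2 = n * ∑ x, f x ^ 2 := by
    rw [Finset.sum_comm]
    simp [sum_comp_update_not _ fun x => f x ^ 2, Finset.mul_sum]
  have hsq : ∑ x, ∑ i : Fin n, f x ^ 2 = n * ∑ x, f x ^ 2 := by
    simp [Finset.mul_sum]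
  unfold cubeD2 cubeE crossSum
  congr 1
  simp only [sub_sq, Finset.sum_add_distrib, Finset.sum_sub_distrib, mul_assoc, ← Finset.mul_sum,
    hflip, hsq]
  ring

theorem sum_cube_succ {M : Type*} [AddCommMonoid M] {n : ℕ} (F : (Fin (n + 1) → Bool) → M) :
    ∑ x, F x = ∑ z, F (Fin.cons false z) + ∑ z, F (Fin.cons true z) := by
  rw [← (Fin.consEquiv fun _ => Bool).sum_comp, Fintype.sum_prod_type, Fintype.sum_bool, add_comm]
  rfl

theorem crossSum_succ {n : ℕ} (f : (Fin (n + 1) → Bool) → ℝ) :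
    crossSum (n + 1) f = 2 * ∑ z, f (Fin.cons false z) * f (Fin.cons true z) +
      crossSum n (fun z => f (Fin.cons false z)) + crossSum n (fun z => f (Fin.cons true z)) := by
  have hcons (b : Bool) (z : Fin n → Bool) :
      ∑ i : Fin (n + 1), f (Fin.cons b z) *
          f (Function.update (Fin.cons b z) i (!(Fin.cons (α := fun _ => Bool) b z i))) =
        f (Fin.cons b z) * f (Fin.cons (!b) z) +
          ∑ i : Fin n, f (Fin.cons b z) * f (Fin.cons b (Function.update z i (!z i))) := by
    simp [Fin.sum_univ_succ, Fin.update_cons_zero, Fin.cons_update]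
  unfold crossSum
  rw [sum_cube_succ]
  simp only [hcons, Finset.sum_add_distrib, Bool.not_false, Bool.not_true]
  simp only [mul_comm (f (Fin.cons true _)) (f (Fin.cons false _))]
  ring

theorem crossSum_eq_zero_of_card_le_one {n : ℕ} {A : Finset (Fin n → Bool)} (hA : A.card ≤ 1)
    {f : (Fin n → Bool) → ℝ} (hf : ∀ x ∉ A, f x = 0) : crossSum n f = 0 := by
  refine Finset.sum_eq_zero fun x _ => Finset.sum_eq_zero fun i _ => ?_
  by_cases hx : x ∈ A
  · have hy : Function.update x i (!x i) ∉ A := fun hy =>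
      by simpa using congrFun (Finset.card_le_one.mp hA _ hy _ hx) i
    rw [hf _ hy, mul_zero]
  · rw [hf x hx, zero_mul]

theorem log_natCast_le_log_natCast {m n : ℕ} (h : m ≤ n) : log m ≤ log n := by
  rcases Nat.eq_zero_or_pos m with rfl | hm
  · simpa using log_natCast_nonneg n
  · exact log_le_log (by exact_mod_cast hm) (by exact_mod_cast h)

noncomputable def logPair (lam c u : ℝ) : ℝ := (c - lam * log u) * (c - lam * log (1 - u))

def LogPairBound (lam c : ℝ) : Prop := ∀ u ∈ Set.Ioo (0 : ℝ) 1, 1 ≤ logPair lam c u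

theorem LogPairBound.one_le_mul {lam c : ℝ} (hpair : LogPairBound lam c) {a b : ℝ} (ha : 0 < a)
    (hb : 0 < b) :
    1 ≤ (c + lam * (log (a + b) - log a)) * (c + lam * (log (a + b) - log b)) := by
  have hab : 0 < a + b := by linarith
  have h := hpair (a / (a + b)) ⟨by positivity, (div_lt_one hab).mpr (by linarith)⟩
  rw [logPair, one_sub_div hab.ne', add_sub_cancel_left, log_div ha.ne' hab.ne',
    log_div hb.ne' hab.ne'] at h
  convert h using 2 <;> ring

theorem convexOn_mul_log_sub_mul_log_one_sub :
    ConvexOn ℝ (Set.Icc 0 (1 / 2)) fun u : ℝ => u * log u - (1 - u) * log (1 - u) := by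
  have hderiv (u : ℝ) (hu : u ∈ Set.Ioo (0 : ℝ) (1 / 2)) :
      HasDerivAt (fun u : ℝ => u * log u - (1 - u) * log (1 - u)) (log (u * (1 - u)) + 2) u := by
    have h1u : 1 - u ≠ 0 := by linarith [hu.2]
    have := (hasDerivAt_mul_log hu.1.ne').sub
      ((hasDerivAt_mul_log h1u).comp u ((hasDerivAt_id u).const_sub 1))
    refine this.congr_deriv ?_
    rw [log_mul hu.1.ne' h1u]; ring
  have hcont : Continuous fun u : ℝ => u * log u - (1 - u) * log (1 - u) :=
    continuous_mul_log.sub (continuous_mul_log.comp (continuous_const.sub continuous_id))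
  refine MonotoneOn.convexOn_of_deriv (convex_Icc _ _) hcont.continuousOn ?_ ?_
  · rw [interior_Icc]; exact fun u hu => (hderiv u hu).differentiableAt.differentiableWithinAt
  · rw [interior_Icc]
    intro u hu v hv huv
    rw [(hderiv u hu).deriv, (hderiv v hv).deriv]
    have := hu.1; have := hv.2
    gcongr ?_ + 2
    exact log_le_log (by nlinarith) (by nlinarith)

noncomputable def balance (lam c u : ℝ) : ℝ :=
  u * (c - lam * log u) - (1 - u) * (c - lam * log (1 - u))

theorem concaveOn_balance {lam : ℝ} (hlam : 0 ≤ lam) (c : ℝ) :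
    ConcaveOn ℝ (Set.Icc 0 (1 / 2)) (balance lam c) := by
  have haff : ConcaveOn ℝ (Set.Icc (0 : ℝ) (1 / 2)) fun u => c * (2 * u) + -c :=
    (LinearMap.concaveOn ((2 * c) • LinearMap.id) (convex_Icc _ _)).add_const (-c) |>.congr
      fun u _ => by simp; ring
  refine (haff.sub (convexOn_mul_log_sub_mul_log_one_sub.smul hlam)).congr fun u _ => ?_
  simp only [balance, Pi.sub_apply, smul_eq_mul]
  ring

theorem ConcaveOn.nonpos_below_zeros {f : ℝ → ℝ} {a b h u : ℝ} (hf : ConcaveOn ℝ (Set.Icc a b) f)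
    (hu : u ∈ Set.Icc a h) (hhb : h < b) (fh : f h = 0) (fb : f b = 0) : f u ≤ 0 := by
  rcases hu.2.eq_or_lt with rfl | hlt
  · exact fh.le
  refine fh ▸ hf.left_le_of_le_right ⟨hu.1, hu.2.trans hhb.le⟩
    ⟨hu.1.trans (hu.2.trans hhb.le), le_rfl⟩ ?_ (fh.trans fb.symm).le
  rw [openSegment_eq_Ioo (hlt.trans hhb)]
  exact ⟨hlt, hhb⟩

theorem ConcaveOn.nonneg_between_zeros {f : ℝ → ℝ} {a b h u : ℝ} (hf : ConcaveOn ℝ (Set.Icc a b) f)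
    (hah : a ≤ h) (hu : u ∈ Set.Icc h b) (fh : f h = 0) (fb : f b = 0) : 0 ≤ f u := by
  have := hf.ge_on_segment ⟨hah, hu.1.trans hu.2⟩ ⟨hah.trans (hu.1.trans hu.2), le_rfl⟩
    (by rwa [segment_eq_Icc (hu.1.trans hu.2)])
  rwa [fh, fb, min_self] at this

theorem hasDerivAt_logPair (lam c : ℝ) {u : ℝ} (hu : u ∈ Set.Ioo (0 : ℝ) 1) :
    HasDerivAt (logPair lam c) (lam * balance lam c u / (u * (1 - u))) u := by
  have hu0 : u ≠ 0 := hu.1.ne'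
  have h1u : 1 - u ≠ 0 := by linarith [hu.2]
  have hlog1 : HasDerivAt (fun v => log (1 - v)) (-1 / (1 - u)) u := by
    simpa using ((hasDerivAt_id u).const_sub 1).log h1u
  refine (((hasDerivAt_log hu.1.ne').const_mul lam).const_sub c |>.mul
    ((hlog1.const_mul lam).const_sub c)).congr_deriv ?_
  field_simp
  simp only [balance]
  ring

theorem logPair_one_sub (lam c u : ℝ) : logPair lam c (1 - u) = logPair lam c u := by
  simp only [logPair, sub_sub_cancel, mul_comm]

theorem monotoneOn_logPair {lam : ℝ} (hlam : 0 ≤ lam) (c : ℝ) {s : Set ℝ} (hs : Convex ℝ s)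
    (hs01 : s ⊆ Set.Ioo 0 1) (hbal : ∀ u ∈ s, 0 ≤ balance lam c u) :
    MonotoneOn (logPair lam c) s := by
  refine monotoneOn_of_hasDerivWithinAt_nonneg hs
    (fun u hu => (hasDerivAt_logPair lam c (hs01 hu)).continuousAt.continuousWithinAt)
    (fun u hu => (hasDerivAt_logPair lam c (hs01 (interior_subset hu))).hasDerivWithinAt)
    fun u hu => ?_
  have hu01 := hs01 (interior_subset hu)
  exact div_nonneg (mul_nonneg hlam (hbal u (interior_subset hu)))
    (mul_pos hu01.1 (sub_pos.2 hu01.2)).le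

theorem antitoneOn_logPair {lam : ℝ} (hlam : 0 ≤ lam) (c : ℝ) {s : Set ℝ} (hs : Convex ℝ s)
    (hs01 : s ⊆ Set.Ioo 0 1) (hbal : ∀ u ∈ s, balance lam c u ≤ 0) :
    AntitoneOn (logPair lam c) s := by
  refine antitoneOn_of_hasDerivWithinAt_nonpos hs
    (fun u hu => (hasDerivAt_logPair lam c (hs01 hu)).continuousAt.continuousWithinAt)
    (fun u hu => (hasDerivAt_logPair lam c (hs01 (interior_subset hu))).hasDerivWithinAt)
    fun u hu => ?_
  have hu01 := hs01 (interior_subset hu)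
  exact div_nonpos_of_nonpos_of_nonneg (mul_nonpos_of_nonneg_of_nonpos hlam
    (hbal u (interior_subset hu))) (mul_pos hu01.1 (sub_pos.2 hu01.2)).le

theorem logPairBound_of_balance_eq_zero {lam c h : ℝ} (hlam : 0 ≤ lam) (h0 : 0 < h)
    (h12 : h < 1 / 2) (hbal : balance lam c h = 0) (hone : logPair lam c h = 1) :
    0 ≤ c ∧ LogPairBound lam c := by
  have hD := concaveOn_balance hlam c
  have hhalf : balance lam c (1 / 2) = 0 := by norm_num [balance]
  have hneg {u} (hu : u ∈ Set.Icc 0 h) := hD.nonpos_below_zeros hu h12 hbal hhalf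
  have hpos {u} (hu : u ∈ Set.Icc h (1 / 2)) := hD.nonneg_between_zeros h0.le hu hbal hhalf
  -- `balance lam c 0 = -c`, as `log 0 = 0`.
  refine ⟨by simpa [balance] using hneg ⟨le_rfl, h0.le⟩, ?_⟩
  have hanti := antitoneOn_logPair hlam c (convex_Ioc 0 h)
    (fun u hu => ⟨hu.1, by linarith [hu.2]⟩) fun u hu => hneg ⟨hu.1.le, hu.2⟩
  have hmono := monotoneOn_logPair hlam c (convex_Icc h (1 / 2))
    (fun u hu => ⟨h0.trans_le hu.1, by linarith [hu.2]⟩) fun u hu => hpos hu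
  have hhalf {u} (hu : u ∈ Set.Ioc (0 : ℝ) (1 / 2)) : 1 ≤ logPair lam c u := by
    rcases le_total u h with huh | huh
    · exact hone ▸ hanti ⟨hu.1, huh⟩ ⟨h0, le_rfl⟩ huh
    · exact hone ▸ hmono ⟨le_rfl, h12.le⟩ ⟨huh, hu.2⟩ huh
  intro u hu
  rcases le_total u (1 / 2) with hu2 | hu2
  · exact hhalf ⟨hu.1, hu2⟩
  · rw [← logPair_one_sub]
    exact hhalf ⟨by linarith [hu.2], by linarith⟩

theorem exists_logPairBound {h : ℝ} (h0 : 0 < h) (h12 : h ≤ 1 / 2) :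
    ∃ lam c : ℝ, 0 ≤ lam ∧ 0 ≤ c ∧
      lam * (-h * log h - (1 - h) * log (1 - h)) + c = 2 * √(h * (1 - h)) ∧
      LogPairBound lam c := by
  rcases h12.eq_or_lt with rfl | h12
  · refine ⟨0, 1, le_rfl, zero_le_one, ?_, fun u _ => by simp [logPair]⟩
    rw [show (1 / 2 * (1 - 1 / 2) : ℝ) = (1 / 2) ^ 2 by norm_num, sqrt_sq (by norm_num)]
    ring
  set σ := √(h * (1 - h))
  set L := log (1 - h) - log h
  have hσ : 0 < σ := sqrt_pos.mpr (by nlinarith)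
  have hσ2 : σ ^ 2 = h * (1 - h) := sq_sqrt (by nlinarith)
  have hL : 0 < L := sub_pos.mpr (log_lt_log h0 (by linarith))
  -- `lam` and `c` are fixed by `c - lam * log h = (1 - h) / σ` and `c - lam * log (1 - h) = h / σ`.
  set lam := (1 - 2 * h) / (σ * L)
  set c := (1 - h) / σ + lam * log h
  have hlamL : lam * L = (1 - 2 * h) / σ := by simp only [lam]; field_simp [hσ.ne', hL.ne']
  have hsh : c - lam * log h = (1 - h) / σ := by ring
  have hs1h : c - lam * log (1 - h) = h / σ := by
    linear_combination hsh - hlamL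
  have hlam : 0 ≤ lam := div_nonneg (by linarith) (by positivity)
  have hbal : balance lam c h = 0 := by
    rw [balance, hsh, hs1h]; ring
  have hone : logPair lam c h = 1 := by
    rw [logPair, hsh, hs1h, div_mul_div_comm, ← sq, hσ2, mul_comm]
    exact div_self (by nlinarith)
  obtain ⟨hc, hpair⟩ := logPairBound_of_balance_eq_zero hlam h0 h12 hbal hone
  refine ⟨lam, c, hlam, hc, ?_, hpair⟩
  have hσ' : σ = h * (1 - h) / σ := by field_simp; exact hσ2
  rw [hσ']
  linear_combination hsh - (1 - h) * hlamL

theorem crossSum_le_of_logPairBound {lam c : ℝ} (hlam : 0 ≤ lam) (hc : 0 ≤ c)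
    (hpair : LogPairBound lam c) :
    ∀ (n : ℕ) (A : Finset (Fin n → Bool)) (f : (Fin n → Bool) → ℝ), (∀ x ∉ A, f x = 0) →
      crossSum n f ≤ (lam * log A.card + c * n) * ∑ x, f x ^ 2
  | 0, A, f, _ => by
    have : crossSum 0 f = 0 := by simp [crossSum]
    rw [this, Nat.cast_zero, mul_zero, add_zero]
    exact mul_nonneg (mul_nonneg hlam (log_natCast_nonneg _)) (sum_nonneg fun x _ => sq_nonneg _)
  | n + 1, A, f, hf => by
    classical
    set g : Bool → (Fin n → Bool) → ℝ := fun b z => f (Fin.cons b z)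
    set B : Bool → Finset (Fin n → Bool) := fun b => univ.filter fun z => Fin.cons b z ∈ A
    have hg (b : Bool) : ∀ z ∉ B b, g b z = 0 := fun z hz => hf _ (by simpa [B] using hz)
    have hcard : A.card = (B false).card + (B true).card := by
      simp only [B, card_filter, ← sum_cube_succ fun x => if x ∈ A then 1 else 0]
      simp
    set U : Bool → ℝ := fun b => ∑ z, g b z ^ 2
    set W := ∑ z, g false z * g true z
    set M := lam * log A.card + c * (n + 1 : ℕ)
    set m : Bool → ℝ := fun b => lam * log (B b).card + c * n
    have hm (b : Bool) : 0 ≤ M - m b := by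
      have : log (B b).card ≤ log A.card := log_natCast_le_log_natCast (by cases b <;> omega)
      push_cast [M, m]; nlinarith [mul_le_mul_of_nonneg_left this hlam]
    have hU (b : Bool) : 0 ≤ U b := sum_nonneg fun z _ => sq_nonneg _
    have hW : 2 * W ≤ (M - m false) * U false + (M - m true) * U true := by
      rcases le_or_gt W 0 with hW0 | hW0
      · nlinarith [mul_nonneg (hm false) (hU false), mul_nonneg (hm true) (hU true)]
      obtain ⟨z, -, hz⟩ := exists_ne_zero_of_sum_ne_zero hW0.ne'
      have hB (b : Bool) : (0 : ℝ) < (B b).card := by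
        have : g b z ≠ 0 := by
          cases b
          exacts [left_ne_zero_of_mul hz, right_ne_zero_of_mul hz]
        exact_mod_cast card_pos.mpr ⟨z, by_contra fun hzB => this (hg b z hzB)⟩
      have hMm (b : Bool) : M - m b =
          c + lam * (log ((B false).card + (B true).card : ℝ) - log (B b).card) := by
        simp only [M, m, hcard]; push_cast; ring
      have hpq := hpair.one_le_mul (hB false) (hB true)
      rw [← hMm, ← hMm] at hpq
      refine two_mul_le_add_of_sq_le_mul (mul_nonneg (hm false) (hU false))
        (mul_nonneg (hm true) (hU true)) ?_
      calc W ^ 2 ≤ U false * U true := sum_mul_sq_le_sq_mul_sq _ _ _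
        _ ≤ (M - m false) * (M - m true) * (U false * U true) :=
          le_mul_of_one_le_left (mul_nonneg (hU false) (hU true)) hpq
        _ = _ := by ring
    have hIH (b : Bool) := crossSum_le_of_logPairBound hlam hc hpair n (B b) (g b) (hg b)
    rw [crossSum_succ, sum_cube_succ fun x => f x ^ 2]
    linarith [hIH false, hIH true]

theorem log_card_div_mem_Icc {n : ℕ} (A : Finset (Fin n → Bool)) :
    log A.card / n ∈ Set.Icc 0 (log 2) := by
  refine ⟨div_nonneg (log_natCast_nonneg _) n.cast_nonneg, div_le_of_le_mul₀ n.cast_nonneg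
    (log_nonneg one_le_two) ?_⟩
  rw [mul_comm, ← log_pow, ← Nat.cast_ofNat, ← Nat.cast_pow]
  refine log_natCast_le_log_natCast (A.card_le_univ.trans_eq ?_)
  simp

theorem crossSum_le_two_sqrt {n : ℕ} {A : Finset (Fin n → Bool)} {h : ℝ}
    (hh : h ∈ Set.Icc 0 (1 / 2)) (hH : -h * log h - (1 - h) * log (1 - h) = log A.card / n)
    {f : (Fin n → Bool) → ℝ} (hf : ∀ x ∉ A, f x = 0) :
    crossSum n f ≤ 2 * √(h * (1 - h)) * n * ∑ x, f x ^ 2 := by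
  have hnonneg : 0 ≤ 2 * √(h * (1 - h)) * n * ∑ x, f x ^ 2 := by positivity
  rcases le_or_gt A.card 1 with hA | hA
  · exact (crossSum_eq_zero_of_card_le_one hA hf).trans_le hnonneg
  have hn : 0 < n := by
    refine Nat.pos_of_ne_zero fun hn => ?_
    subst hn
    have := A.card_le_univ
    simp only [Fintype.card_pi, Finset.univ_eq_empty, Finset.prod_empty] at this
    omega
  have h0 : 0 < h := by
    refine hh.1.lt_of_ne fun h0 => ?_
    have hlog : 0 < log A.card / n := div_pos (log_pos (by exact_mod_cast hA)) (by positivity)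
    rw [← hH, ← h0] at hlog
    simp at hlog
  obtain ⟨lam, c, hlam, hc, hent, hpair⟩ := exists_logPairBound h0 hh.2
  calc crossSum n f ≤ (lam * log A.card + c * n) * ∑ x, f x ^ 2 :=
        crossSum_le_of_logPairBound hlam hc hpair n A f hf
    _ = 2 * √(h * (1 - h)) * n * ∑ x, f x ^ 2 := by
        rw [← hent, hH]; field_simp

theorem fracBoundary_lower_bound_general (n : ℕ)
    (A : Finset (Fin n → Bool))
    (Hinv : ℝ → ℝ)
    (hHinv : ∀ y ∈ Set.Icc (0 : ℝ) (Real.log 2),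
      Hinv y ∈ Set.Icc (0 : ℝ) (1 / 2) ∧
        -(Hinv y) * Real.log (Hinv y) - (1 - Hinv y) * Real.log (1 - Hinv y) = y) :
    fracBoundary n A ≥
      4 * n *
        (1 / 2 -
          Real.sqrt (Hinv (Real.log A.card / n) * (1 - Hinv (Real.log A.card / n)))) *
        ((A.card : ℝ) / 2 ^ n) := by
  classical
  obtain ⟨hh, hH⟩ := hHinv _ (log_card_div_mem_Icc A)
  refine le_csInf ⟨_, fun x => if x ∈ A then 1 else 0, fun x hx => if_neg hx, ?_, rfl⟩ ?_
  · simp [cubeE]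
  rintro v ⟨f, hf, hE, rfl⟩
  have hsum : ∑ x, f x ^ 2 = A.card := by
    rw [cubeE] at hE
    exact (div_left_inj' (by positivity)).mp hE
  have hcross := crossSum_le_two_sqrt hh hH hf
  rw [cubeD2_eq, hsum]
  rw [hsum] at hcross
  rw [mul_div_assoc']
  gcongr
  linarith

/-- **Discrete Faber–Krahn lower bound**: for any nonempty `A ⊆ {0,1}^n`,
`|∂*A| ≥ 4n·(1/2 − √(H⁻¹(log|A|/n)·(1 − H⁻¹(log|A|/n))))·|A|/2^n`. -/
theorem fracBoundary_lower_bound (n : ℕ) (hn : 1 ≤ n)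
    (A : Finset (Fin n → Bool)) (hA : A.Nonempty)
    (Hinv : ℝ → ℝ)
    (hHinv : ∀ y ∈ Set.Icc (0 : ℝ) (Real.log 2),
      Hinv y ∈ Set.Icc (0 : ℝ) (1 / 2) ∧
        -(Hinv y) * Real.log (Hinv y) - (1 - Hinv y) * Real.log (1 - Hinv y) = y) :
    fracBoundary n A ≥
      4 * n *
        (1 / 2 -
          Real.sqrt (Hinv (Real.log A.card / n) * (1 - Hinv (Real.log A.card / n)))) *
        ((A.card : ℝ) / 2 ^ n) :=
  fracBoundary_lower_bound_general n A Hinv hHinv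
end

section
/- For every ε > 0 there exists N such that for all n ≥ N and every Hamming ball B ⊆ {0,1}^n of radius r with 0 ≤ r ≤ n/2 (B = {x : d(x, x₀) ≤ r} for some center x₀), one has |∂*B| ≤ 4n · (1/2 − √(H⁻¹(log|B|/n)·(1 − H⁻¹(log|B|/n))) + ε) · |B|/2^n. -/
/-!
Test the infimum defining `|∂*B|` with radial functions `f x = h d / √(n.choose d)`, where
`d = hammingDist x x₀`. Then `E f² = ∑ h_k² / 2ⁿ`, and since `(n choose k) (n - k)` equals
`(n choose (k+1)) (k + 1)`, the Dirichlet energy becomes the Jacobi form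
`2 (n ∑ h_k² - 2 ∑ √((n-k)(k+1)) h_k h_{k+1}) / 2ⁿ`. Taking `h` constant on the `m ≈ 2/ε`
outermost layers `r+1-m, …, r` of the ball, the cross terms per unit mass are at least
`(m-1)/m · √((n-r)(r+1-m))`, which falls short of `√(r(n-r))` by at most `n/m + √(nm) ≤ nε`
once `n ≥ 4m/ε²` (for `r < m` the sphere of radius `r` alone suffices). This gives
`|∂*B| ≤ (2n - 4√(r(n-r)) + 4nε) |B|/2ⁿ`. Finally `|B| ≤ exp (n H(r/n))` for `r ≤ n/2`, so
`θ = H⁻¹(log|B|/n) ≤ r/n`, and as `t(1-t)` increases on `[0, 1/2]`, `n √(θ(1-θ)) ≤ √(r(n-r))`.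
-/

open Finset Real

theorem mul_div_sqrt_sub_div_sqrt_sq {C D a b u v : ℝ} (hC : 0 < C) (hD : 0 < D)
    (ha : 0 ≤ a) (hb : 0 ≤ b) (h : C * a = D * b) :
    C * a * (u / √C - v / √D) ^ 2 = a * u ^ 2 + b * v ^ 2 - 2 * √(a * b) * u * v := by
  have hsC := sqrt_pos.2 hC
  have hsD := sqrt_pos.2 hD
  have hCD : C * a / (√C * √D) = √(a * b) := by
    rw [div_eq_iff (by positivity), ← sqrt_mul hC.le, ← sqrt_mul (by positivity),
      mul_mul_mul_comm, mul_comm a, mul_comm b, ← h, sqrt_mul_self (by positivity)]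
  calc C * a * (u / √C - v / √D) ^ 2
      = C * a / C * u ^ 2 + C * a / D * v ^ 2 - 2 * (C * a / (√C * √D)) * u * v := by
        rw [sub_sq, div_pow, div_pow, sq_sqrt hC.le, sq_sqrt hD.le]
        ring
    _ = a * u ^ 2 + b * v ^ 2 - 2 * √(a * b) * u * v := by
        rw [hCD, h, mul_div_cancel_left₀ _ hD.ne', ← h, mul_div_cancel_left₀ _ hC.ne']

theorem pow_mul_pow_sub_le_pow_mul_pow_sub {p q : ℝ} (hp : 0 ≤ p) (hpq : p ≤ q) {d r n : ℕ}
    (hdr : d ≤ r) (hrn : r ≤ n) :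
    p ^ r * q ^ (n - r) ≤ p ^ d * q ^ (n - d) := by
  have hq : 0 ≤ q := hp.trans hpq
  calc p ^ r * q ^ (n - r) = p ^ d * p ^ (r - d) * q ^ (n - r) := by
        rw [← pow_add, Nat.add_sub_cancel' hdr]
    _ ≤ p ^ d * q ^ (r - d) * q ^ (n - r) := by gcongr
    _ = p ^ d * q ^ (n - d) := by
        rw [mul_assoc, ← pow_add]
        congr 2
        omega

theorem binEntropy_eq_neg_mul_log_sub_mul_log (p : ℝ) :
    binEntropy p = -p * log p - (1 - p) * log (1 - p) := by
  simp only [binEntropy, log_inv]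
  ring

theorem mul_one_sub_le_of_binEntropy_le {θ ρ : ℝ} (hθ : θ ∈ Set.Icc 0 2⁻¹)
    (hρ : ρ ∈ Set.Icc 0 2⁻¹) (h : binEntropy θ ≤ binEntropy ρ) :
    θ * (1 - θ) ≤ ρ * (1 - ρ) := by
  have := (binEntropy_strictMonoOn.le_iff_le hθ hρ).1 h
  nlinarith [hρ.2]

theorem sqrt_mul_le_half_mul {s t m n ε : ℝ} (hs : 0 ≤ s) (hsm : s ≤ m) (ht : 0 ≤ t)
    (htn : t ≤ n) (hε : 0 ≤ ε) (hnm : 4 * m ≤ n * ε ^ 2) :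
    √(s * t) ≤ n * ε / 2 :=
  sqrt_le_iff.2 ⟨by have := ht.trans htn; positivity,
    by nlinarith [mul_le_mul hsm htn ht (hs.trans hsm)]⟩

theorem sqrt_mul_sub_le_window {n r a m ε : ℝ} (ha : 0 ≤ a) (har : a ≤ r) (hrn : r ≤ n)
    (hm : r - a + 1 = m) (hεm : 2 ≤ ε * m) (hnm : 4 * m ≤ n * ε ^ 2) :
    √(r * (n - r)) ≤ (r - a) / (r - a + 1) * √((n - r) * a) + n * ε := by
  have hm0 : 0 < m := by linarith
  have hε : 0 ≤ ε := by nlinarith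
  have hsplit : √(r * (n - r)) ≤ √((n - r) * a) + √((r - a) * (n - r)) := by
    have h1 : 0 ≤ (n - r) * a := mul_nonneg (by linarith) ha
    have h2 : 0 ≤ (r - a) * (n - r) := mul_nonneg (by linarith) (by linarith)
    refine sqrt_le_iff.2 ⟨by positivity, ?_⟩
    nlinarith [sq_sqrt h1, sq_sqrt h2,
      mul_nonneg (sqrt_nonneg ((n - r) * a)) (sqrt_nonneg ((r - a) * (n - r)))]
  have hfar : √((r - a) * (n - r)) ≤ n * ε / 2 :=
    sqrt_mul_le_half_mul (by linarith) (by linarith) (by linarith) (by linarith) hε hnm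
  have hnear : √((n - r) * a) ≤ n := by
    refine sqrt_le_iff.2 ⟨by linarith, ?_⟩
    nlinarith
  have hnear' : √((n - r) * a) / m ≤ n * ε / 2 := by
    rw [div_le_iff₀ hm0]
    nlinarith
  have hq : (r - a) / (r - a + 1) * √((n - r) * a) = √((n - r) * a) - √((n - r) * a) / m := by
    rw [hm, show r - a = m - 1 by linarith]
    field_simp
  linarith

section HammingCube

variable {ι : Type*} [Fintype ι] [DecidableEq ι]

theorem card_filter_hammingDist_eq (x₀ : ι → Bool) (k : ℕ) :
    #{x | hammingDist x x₀ = k} = (Fintype.card ι).choose k := by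
  rw [← card_univ, ← card_powersetCard]
  refine card_bij' (fun x _ => ({j | x j ≠ x₀ j} : Finset ι))
    (fun s _ j => if j ∈ s then !x₀ j else x₀ j) ?_ ?_ ?_ ?_
  · intro x hx
    simpa [mem_powersetCard, hammingDist] using hx
  · intro s hs
    simp only [mem_powersetCard, subset_univ, true_and] at hs
    simp only [mem_filter, mem_univ, true_and, hammingDist, ← hs]
    congr 1
    ext j
    by_cases hj : j ∈ s <;> simp [hj]
  · intro x _
    funext j
    by_cases hj : x j = x₀ j
    · simp [hj]
    · simpa [hj] using Bool.eq_not_of_ne (Ne.symm hj)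
  · intro s _
    ext j
    by_cases hj : j ∈ s <;> simp [hj]

theorem sum_hammingDist_eq_sum_choose {M : Type*} [AddCommMonoid M] (x₀ : ι → Bool)
    (F : ℕ → M) :
    ∑ x, F (hammingDist x x₀) =
      ∑ k ∈ range (Fintype.card ι + 1), (Fintype.card ι).choose k • F k := by
  rw [← sum_fiberwise_of_maps_to (g := fun x => hammingDist x x₀)
    (t := range (Fintype.card ι + 1))
    (fun x _ => mem_range.2 (Nat.lt_succ_of_le hammingDist_le_card_fintype))]
  refine sum_congr rfl fun k _ => ?_
  rw [← card_filter_hammingDist_eq x₀ k, ← sum_const]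
  exact sum_congr rfl fun x hx => by rw [(mem_filter.1 hx).2]

theorem hammingDist_update_not_of_eq {x x₀ : ι → Bool} {i : ι} (h : x i = x₀ i) :
    hammingDist (Function.update x i (!x i)) x₀ = hammingDist x x₀ + 1 := by
  have : univ.filter (fun j => Function.update x i (!x i) j ≠ x₀ j) =
      insert i (univ.filter fun j => x j ≠ x₀ j) := by
    ext j
    rcases eq_or_ne j i with rfl | hj
    · simp [h]
    · simp [hj]
  rw [hammingDist, this, card_insert_of_notMem (by simp [h]), hammingDist]

theorem hammingDist_update_not_of_ne {x x₀ : ι → Bool} {i : ι} (h : x i ≠ x₀ i) :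
    hammingDist (Function.update x i (!x i)) x₀ = hammingDist x x₀ - 1 := by
  have : univ.filter (fun j => Function.update x i (!x i) j ≠ x₀ j) =
      (univ.filter fun j => x j ≠ x₀ j).erase i := by
    ext j
    rcases eq_or_ne j i with rfl | hj
    · simp [h]
    · simp [hj]
  rw [hammingDist, this, card_erase_of_mem (by simp [h]), hammingDist]

theorem sum_hammingDist_update_not {M : Type*} [AddCommMonoid M] (F : ℕ → M)
    (x x₀ : ι → Bool) :
    ∑ i, F (hammingDist (Function.update x i (!x i)) x₀) =
      (Fintype.card ι - hammingDist x x₀) • F (hammingDist x x₀ + 1) +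
        hammingDist x x₀ • F (hammingDist x x₀ - 1) := by
  have hcard : #{i | x i = x₀ i} = Fintype.card ι - hammingDist x x₀ := by
    have := card_filter_add_card_filter_not (s := univ) (fun i => x i = x₀ i)
    rw [card_univ] at this
    exact Nat.eq_sub_of_add_eq this
  rw [← sum_filter_add_sum_filter_not univ (fun i => x i = x₀ i), ← hcard]
  congr 1
  · rw [sum_congr rfl fun i hi => by rw [hammingDist_update_not_of_eq (mem_filter.1 hi).2],
      sum_const]
  · rw [sum_congr rfl fun i hi => by rw [hammingDist_update_not_of_ne (mem_filter.1 hi).2],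
      sum_const]
    rfl

def hammingBall (x₀ : ι → Bool) (r : ℕ) : Finset (ι → Bool) :=
  univ.filter fun x => hammingDist x x₀ ≤ r

@[simp]
theorem mem_hammingBall {x₀ x : ι → Bool} {r : ℕ} :
    x ∈ hammingBall x₀ r ↔ hammingDist x x₀ ≤ r := by
  simp [hammingBall]

theorem card_hammingBall_mul_pow_le_one (x₀ : ι → Bool) {r : ℕ} (hr : r ≤ Fintype.card ι)
    {p : ℝ} (hp : 0 ≤ p) (hp' : p ≤ 1 - p) :
    #(hammingBall x₀ r) * (p ^ r * (1 - p) ^ (Fintype.card ι - r)) ≤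
      1 := by
  set N := Fintype.card ι
  have hmass : ∑ x, p ^ hammingDist x x₀ * (1 - p) ^ (N - hammingDist x x₀) = 1 := by
    have := add_pow p (1 - p) N
    rw [add_sub_cancel, one_pow] at this
    rw [sum_hammingDist_eq_sum_choose x₀ fun k => p ^ k * (1 - p) ^ (N - k)]
    exact (sum_congr rfl fun k _ => by rw [nsmul_eq_mul, mul_comm]).trans this.symm
  calc #(hammingBall x₀ r) * (p ^ r * (1 - p) ^ (N - r))
      ≤ ∑ x ∈ hammingBall x₀ r,
          p ^ hammingDist x x₀ * (1 - p) ^ (N - hammingDist x x₀) := by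
        rw [← nsmul_eq_mul, ← sum_const]
        exact sum_le_sum fun x hx =>
          pow_mul_pow_sub_le_pow_mul_pow_sub hp hp' (mem_hammingBall.1 hx) hr
    _ ≤ ∑ x, p ^ hammingDist x x₀ * (1 - p) ^ (N - hammingDist x x₀) :=
        sum_le_univ_sum_of_nonneg fun x =>
          mul_nonneg (pow_nonneg hp _) (pow_nonneg (hp.trans hp') _)
    _ = 1 := hmass

end HammingCube

variable {n : ℕ}

theorem cubeD2_radial (x₀ : Fin n → Bool) (g : ℕ → ℝ) :
    cubeD2 n (fun x => g (hammingDist x x₀)) =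
      2 * (∑ k ∈ range n, (n.choose k * (n - k) : ℕ) • (g k - g (k + 1)) ^ 2) / 2 ^ n := by
  unfold cubeD2 cubeE
  congr 1
  rw [sum_congr rfl fun x _ =>
    sum_hammingDist_update_not (fun k => (g (hammingDist x x₀) - g k) ^ 2) x x₀]
  simp only [Fintype.card_fin]
  rw [sum_hammingDist_eq_sum_choose x₀ (fun d => (n - d) • (g d - g (d + 1)) ^ 2 +
    d • (g d - g (d - 1)) ^ 2), Fintype.card_fin]
  simp only [smul_add, sum_add_distrib, smul_smul]
  rw [sum_range_succ, sum_range_succ']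
  simp only [Nat.sub_self, mul_zero, zero_smul, add_zero, Nat.add_sub_cancel,
    Nat.choose_succ_right_eq, ← sq_abs (g _ - g _), abs_sub_comm]
  ring

theorem sum_choose_mul_sub_div_sqrt_choose_sq (h : ℕ → ℝ) :
    ∑ k ∈ range n, (n.choose k * (n - k) : ℕ) •
        (h k / √(n.choose k) - h (k + 1) / √(n.choose (k + 1))) ^ 2 =
      n * ∑ k ∈ range (n + 1), h k ^ 2 -
        2 * ∑ k ∈ range n, √((n - k) * (k + 1)) * h k * h (k + 1) := by
  have hterm : ∀ k ∈ range n, (n.choose k * (n - k) : ℕ) •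
      (h k / √(n.choose k) - h (k + 1) / √(n.choose (k + 1))) ^ 2 =
      (n - k) * h k ^ 2 + (k + 1) * h (k + 1) ^ 2 -
        2 * √((n - k) * (k + 1)) * h k * h (k + 1) := by
    intro k hk
    have hkn : k < n := mem_range.1 hk
    rw [nsmul_eq_mul, Nat.cast_mul, Nat.cast_sub hkn.le]
    refine mul_div_sqrt_sub_div_sqrt_sq (by exact_mod_cast Nat.choose_pos hkn.le)
      (by exact_mod_cast Nat.choose_pos hkn) (by linarith [(Nat.cast_lt (α := ℝ)).2 hkn])
      (by positivity) ?_
    rw [← Nat.cast_sub hkn.le]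
    exact_mod_cast (Nat.choose_succ_right_eq n k).symm
  have hshift : ∑ k ∈ range n, ((k : ℝ) + 1) * h (k + 1) ^ 2 =
      ∑ k ∈ range (n + 1), (k : ℝ) * h k ^ 2 := by
    simp [sum_range_succ' _ n]
  have hlast : ∑ k ∈ range n, ((n : ℝ) - k) * h k ^ 2 =
      ∑ k ∈ range (n + 1), ((n : ℝ) - k) * h k ^ 2 := by
    simp [sum_range_succ]
  rw [sum_congr rfl hterm, sum_sub_distrib, sum_add_distrib, hshift, hlast, ← sum_add_distrib,
    mul_sum, mul_sum]
  simp only [← add_mul, sub_add_cancel, mul_assoc]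

theorem cubeD2_radial_div_sqrt_choose (x₀ : Fin n → Bool) (h : ℕ → ℝ) :
    cubeD2 n (fun x => h (hammingDist x x₀) / √(n.choose (hammingDist x x₀))) =
      2 * (n * ∑ k ∈ range (n + 1), h k ^ 2 -
        2 * ∑ k ∈ range n, √((n - k) * (k + 1)) * h k * h (k + 1)) / 2 ^ n := by
  rw [cubeD2_radial x₀ fun k => h k / √(n.choose k), sum_choose_mul_sub_div_sqrt_choose_sq]

theorem cubeE_sq_radial_div_sqrt_choose (x₀ : Fin n → Bool) (h : ℕ → ℝ) :
    cubeE n (fun x => (h (hammingDist x x₀) / √(n.choose (hammingDist x x₀))) ^ 2) =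
      (∑ k ∈ range (n + 1), h k ^ 2) / 2 ^ n := by
  unfold cubeE
  rw [sum_hammingDist_eq_sum_choose x₀ fun k => (h k / √(n.choose k)) ^ 2, Fintype.card_fin]
  refine congrArg (· / _) (sum_congr rfl fun k hk => ?_)
  have hC : (0 : ℝ) < n.choose k := by
    exact_mod_cast Nat.choose_pos (Nat.lt_succ_iff.1 (mem_range.1 hk))
  rw [nsmul_eq_mul, div_pow, sq_sqrt hC.le, mul_div_cancel₀ _ hC.ne']

theorem fracBoundary_le_cubeD2 (A : Finset (Fin n → Bool)) (f : (Fin n → Bool) → ℝ)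
    (hf : ∀ x, x ∉ A → f x = 0) (hf2 : cubeE n (fun x => f x ^ 2) = #A / 2 ^ n) :
    fracBoundary n A ≤ cubeD2 n f := by
  refine csInf_le ⟨0, ?_⟩ ⟨f, hf, hf2, rfl⟩
  rintro v ⟨g, -, -, rfl⟩
  unfold cubeD2 cubeE
  positivity

theorem fracBoundary_hammingBall_le_of_radial (x₀ : Fin n → Bool) {r : ℕ} (h : ℕ → ℝ)
    (hsupp : ∀ k, r < k → h k = 0)
    (hsq : ∑ k ∈ range (n + 1), h k ^ 2 = #(hammingBall x₀ r)) :
    fracBoundary n (hammingBall x₀ r) ≤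
      2 * (n * #(hammingBall x₀ r) -
        2 * ∑ k ∈ range n, √((n - k) * (k + 1)) * h k * h (k + 1)) / 2 ^ n := by
  refine (fracBoundary_le_cubeD2 _
    (fun x => h (hammingDist x x₀) / √(n.choose (hammingDist x x₀)))
    (fun x hx => ?_) ?_).trans ?_
  · simp [hsupp _ (by simpa using hx)]
  · rw [cubeE_sq_radial_div_sqrt_choose, hsq]
  · rw [cubeD2_radial_div_sqrt_choose, hsq]

def layerWindow (a r : ℕ) (c : ℝ) (k : ℕ) : ℝ := if k ∈ Icc a r then c else 0

theorem sum_range_layerWindow_sq {a r n : ℕ} (har : a ≤ r) (hrn : r ≤ n) (c : ℝ) :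
    ∑ k ∈ range (n + 1), layerWindow a r c k ^ 2 = ((r : ℝ) - a + 1) * c ^ 2 := by
  have hsub : Icc a r ⊆ range (n + 1) := fun k hk => by
    have := (mem_Icc.1 hk).2
    rw [mem_range]
    omega
  simp only [layerWindow, ite_pow, ne_eq, OfNat.ofNat_ne_zero, not_false_eq_true, zero_pow,
    sum_ite_mem, inter_eq_right.2 hsub, sum_const, Nat.card_Icc, nsmul_eq_mul]
  rw [Nat.cast_sub (by omega)]
  push_cast
  ring

theorem le_sum_sqrt_mul_layerWindow {a r n : ℕ} (har : a ≤ r) (hrn : r < n) {c : ℝ}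
    (hc : 0 ≤ c) :
    (r - a) * √((n - r) * a) * c ^ 2 ≤
      ∑ k ∈ range n,
        √((n - k) * (k + 1)) * layerWindow a r c k * layerWindow a r c (k + 1) := by
  have hnonneg : ∀ j, 0 ≤ layerWindow a r c j := fun j => by
    unfold layerWindow
    split_ifs <;> positivity
  calc (r - a) * √((n - r) * a) * c ^ 2 = ∑ k ∈ Ico a r, √((n - r) * a) * c * c := by
        rw [sum_const, Nat.card_Ico, nsmul_eq_mul, Nat.cast_sub har]
        ring
    _ ≤ ∑ k ∈ Ico a r, √((n - k) * (k + 1)) * layerWindow a r c k *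
          layerWindow a r c (k + 1) := by
        refine sum_le_sum fun k hk => ?_
        obtain ⟨hak, hkr⟩ := mem_Ico.1 hk
        have hak' : a ≤ (k : ℝ) := by exact_mod_cast hak
        have hkr' : (k : ℝ) < r := by exact_mod_cast hkr
        have hrn' : (r : ℝ) < n := by exact_mod_cast hrn
        rw [layerWindow, layerWindow, if_pos (mem_Icc.2 ⟨hak, hkr.le⟩),
          if_pos (mem_Icc.2 ⟨by omega, hkr⟩)]
        gcongr <;> linarith
    _ ≤ ∑ k ∈ range n, √((n - k) * (k + 1)) * layerWindow a r c k *
          layerWindow a r c (k + 1) :=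
        sum_le_sum_of_subset_of_nonneg (fun k hk => mem_range.2 ((mem_Ico.1 hk).2.trans hrn))
          fun k _ _ => mul_nonneg (mul_nonneg (sqrt_nonneg _) (hnonneg k)) (hnonneg (k + 1))

theorem fracBoundary_hammingBall_le_window (x₀ : Fin n → Bool) {a r : ℕ} (har : a ≤ r)
    (hrn : r < n) :
    fracBoundary n (hammingBall x₀ r) ≤
      2 * (n - 2 * ((r - a) / (r - a + 1)) * √((n - r) * a)) *
        (#(hammingBall x₀ r) / 2 ^ n) := by
  set B := hammingBall x₀ r
  have hw : (0 : ℝ) < r - a + 1 := by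
    have : (a : ℝ) ≤ r := by exact_mod_cast har
    linarith
  set c := √(#B / (r - a + 1))
  have hc2 : c ^ 2 = #B / (r - a + 1) := sq_sqrt (by positivity)
  have hsq : ∑ k ∈ range (n + 1), layerWindow a r c k ^ 2 = #B := by
    rw [sum_range_layerWindow_sq har hrn.le, hc2, mul_div_cancel₀ _ hw.ne']
  have hsupp : ∀ k, r < k → layerWindow a r c k = 0 := fun k hk => by
    rw [layerWindow, if_neg fun hk' => by have := (mem_Icc.1 hk').2; omega]
  refine (fracBoundary_hammingBall_le_of_radial x₀ _ hsupp hsq).trans ?_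
  have hrhs : 2 * (n - 2 * ((r - a) / (r - a + 1)) * √((n - r) * a)) * (#B / 2 ^ n) =
      2 * (n * #B - 2 * ((r - a) * √((n - r) * a) * c ^ 2)) / 2 ^ n := by
    rw [hc2]
    field_simp
  rw [hrhs]
  gcongr
  exact le_sum_sqrt_mul_layerWindow har hrn (sqrt_nonneg _)

theorem fracBoundary_hammingBall_le_sub_sqrt (x₀ : Fin n → Bool) {r m : ℕ} {ε : ℝ}
    (hm : 1 ≤ m) (hεm : 2 ≤ ε * m) (hnm : 4 * m ≤ n * ε ^ 2) (hrn : r < n) :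
    fracBoundary n (hammingBall x₀ r) ≤
      (2 * n - 4 * √(r * (n - r)) + 4 * n * ε) * (#(hammingBall x₀ r) / 2 ^ n) := by
  have hm' : (1 : ℝ) ≤ m := by exact_mod_cast hm
  have hε : 0 ≤ ε := by nlinarith
  have hrn' : (r : ℝ) ≤ n := by exact_mod_cast hrn.le
  rcases lt_or_ge r m with hrm | hmr
  · have := sqrt_mul_le_half_mul (Nat.cast_nonneg r) (by exact_mod_cast hrm.le)
      (sub_nonneg.2 hrn') (by linarith) hε hnm
    refine (fracBoundary_hammingBall_le_window x₀ le_rfl hrn).trans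
      (mul_le_mul_of_nonneg_right ?_ (by positivity))
    simp only [sub_self, zero_div, zero_mul, mul_zero, sub_zero]
    nlinarith
  · have ha : ((r + 1 - m : ℕ) : ℝ) = r + 1 - m := by
      rw [Nat.cast_sub (by omega)]
      push_cast
      ring
    have := sqrt_mul_sub_le_window (a := ((r + 1 - m : ℕ) : ℝ)) (m := m) (by positivity)
      (by rw [ha]; linarith) hrn' (by rw [ha]; ring) hεm hnm
    refine (fracBoundary_hammingBall_le_window x₀ (a := r + 1 - m) (by omega) hrn).trans
      (mul_le_mul_of_nonneg_right ?_ (by positivity))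
    linarith

theorem div_mem_Icc_zero_inv_two {r : ℕ} (h2r : 2 * r ≤ n) :
    (r / n : ℝ) ∈ Set.Icc 0 2⁻¹ := by
  refine ⟨by positivity, div_le_of_le_mul₀ (by positivity) (by positivity) ?_⟩
  have : (2 * r : ℝ) ≤ n := by exact_mod_cast h2r
  linarith

theorem log_card_hammingBall_le (x₀ : Fin n → Bool) {r : ℕ} (hn : 0 < n) (h2r : 2 * r ≤ n) :
    log #(hammingBall x₀ r) ≤ n * binEntropy (r / n) := by
  set ρ : ℝ := r / n
  have hρ := div_mem_Icc_zero_inv_two h2r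
  have hρr : 0 < ρ ^ r := by
    rcases Nat.eq_zero_or_pos r with rfl | hr
    · simp
    · positivity
  have hρn : 0 < (1 - ρ) ^ (n - r) := pow_pos (by linarith [hρ.2]) _
  have hB : (0 : ℝ) < #(hammingBall x₀ r) := by
    exact_mod_cast card_pos.2 ⟨x₀, by simp⟩
  have hmass := card_hammingBall_mul_pow_le_one x₀ (r := r) (by simp; omega) hρ.1
    (by linarith [hρ.2])
  rw [Fintype.card_fin] at hmass
  calc log #(hammingBall x₀ r)
      ≤ -log (ρ ^ r * (1 - ρ) ^ (n - r)) := by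
        have := log_le_log (by positivity) hmass
        rw [log_mul hB.ne' (by positivity), log_one] at this
        linarith
    _ = n * binEntropy ρ := by
        rw [log_mul hρr.ne' hρn.ne', log_pow, log_pow, binEntropy_eq_neg_mul_log_sub_mul_log,
          Nat.cast_sub (by omega)]
        have : (n : ℝ) ≠ 0 := by positivity
        simp only [ρ]
        field_simp
        ring

theorem log_card_hammingBall_div_mem_Icc (x₀ : Fin n → Bool) {r : ℕ} (hn : 0 < n)
    (h2r : 2 * r ≤ n) :
    log #(hammingBall x₀ r) / n ∈ Set.Icc 0 (log 2) := by
  have hn' : (0 : ℝ) < n := by exact_mod_cast hn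
  refine ⟨div_nonneg (log_natCast_nonneg _) hn'.le, (div_le_iff₀ hn').2 ?_⟩
  calc log #(hammingBall x₀ r) ≤ n * binEntropy (r / n) := log_card_hammingBall_le x₀ hn h2r
    _ ≤ n * log 2 := by gcongr; exact binEntropy_le_log_two
    _ = log 2 * n := mul_comm _ _

theorem mul_sqrt_le_of_binEntropy_eq (x₀ : Fin n → Bool) {r : ℕ} (hn : 0 < n)
    (h2r : 2 * r ≤ n) {θ : ℝ} (hθ : θ ∈ Set.Icc 0 (1 / 2))
    (hθB : binEntropy θ = log #(hammingBall x₀ r) / n) :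
    n * √(θ * (1 - θ)) ≤ √(r * (n - r)) := by
  have hn' : (0 : ℝ) < n := by exact_mod_cast hn
  have hθρ : θ * (1 - θ) ≤ r / n * (1 - r / n) := by
    refine mul_one_sub_le_of_binEntropy_le (by simpa using hθ) (div_mem_Icc_zero_inv_two h2r) ?_
    rw [hθB, div_le_iff₀' hn']
    exact log_card_hammingBall_le x₀ hn h2r
  calc n * √(θ * (1 - θ)) = √(n ^ 2 * (θ * (1 - θ))) := by
        rw [sqrt_mul (sq_nonneg (n : ℝ)), sqrt_sq hn'.le]
    _ ≤ √(n ^ 2 * (r / n * (1 - r / n))) := by gcongr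
    _ = √(r * (n - r)) := by
        congr 1
        field_simp

/-- **Fractional edge-boundary of Hamming balls (upper bound)**: for every `ε > 0`
there is `N` such that for all `n ≥ N` and every Hamming ball `B ⊆ {0,1}^n` of
radius `r ≤ n/2`,
`|∂*B| ≤ 4n·(1/2 − √(H⁻¹(log|B|/n)·(1 − H⁻¹(log|B|/n))) + ε)·|B|/2^n`. -/
theorem fracBoundary_ball_upper_bound
    (Hinv : ℝ → ℝ)
    (hHinv : ∀ y ∈ Set.Icc (0 : ℝ) (Real.log 2),
      Hinv y ∈ Set.Icc (0 : ℝ) (1 / 2) ∧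
        -(Hinv y) * Real.log (Hinv y) - (1 - Hinv y) * Real.log (1 - Hinv y) = y) :
    ∀ ε > (0 : ℝ), ∃ N : ℕ, ∀ n ≥ N, ∀ B : Finset (Fin n → Bool),
      (∃ (x₀ : Fin n → Bool) (r : ℕ), (r : ℝ) ≤ n / 2 ∧
          B = Finset.univ.filter fun x => hammingDist x x₀ ≤ r) →
      fracBoundary n B ≤
        4 * n *
          (1 / 2 -
            Real.sqrt (Hinv (Real.log B.card / n) * (1 - Hinv (Real.log B.card / n)))
            + ε) *
          ((B.card : ℝ) / 2 ^ n) := by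
  intro ε hε
  obtain ⟨m, hm, hεm⟩ : ∃ m : ℕ, 1 ≤ m ∧ 2 ≤ ε * m :=
    ⟨⌈2 / ε⌉₊, Nat.ceil_pos.2 (by positivity), (div_le_iff₀' hε).1 (Nat.le_ceil _)⟩
  refine ⟨⌈4 * m / ε ^ 2⌉₊ + 1, fun n hn B hB => ?_⟩
  obtain ⟨x₀, r, hr, hB⟩ := hB
  replace hB : B = hammingBall x₀ r := hB
  subst hB
  have hnm : 4 * m ≤ n * ε ^ 2 := by
    rw [← div_le_iff₀ (by positivity)]
    exact (Nat.le_ceil _).trans (by exact_mod_cast (by omega : ⌈4 * m / ε ^ 2⌉₊ ≤ n))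
  have h2r : 2 * r ≤ n := by exact_mod_cast (by linarith : (2 * r : ℝ) ≤ n)
  obtain ⟨hθ, hHθ⟩ := hHinv _ (log_card_hammingBall_div_mem_Icc x₀ (by omega) h2r)
  have hθr := mul_sqrt_le_of_binEntropy_eq x₀ (by omega) h2r hθ
    (by rw [binEntropy_eq_neg_mul_log_sub_mul_log, hHθ])
  refine (fracBoundary_hammingBall_le_sub_sqrt x₀ hm hεm hnm (by omega)).trans
    (mul_le_mul_of_nonneg_right ?_ (by positivity))
  linarith
end

section
/- Let n ≥ 1 and let f : {0,1}^n → ℝ be a nonnegative function. Then Ent(f²) ≤ 2 log 2 · K²(f), where K²(f) = (1/4) · E_x Σ_{y∼x} (f(x) + f(y))². -/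
/-- `K²(f) = (1/4)·E_x ∑_{y∼x} (f x + f y)²` on the Hamming cube `{0,1}^n`. -/
noncomputable def cubeK2 (n : ℕ) (f : (Fin n → Bool) → ℝ) : ℝ :=
  (1 / 4) * cubeE n (fun x => ∑ i : Fin n, (f x + f (Function.update x i (!x i))) ^ 2)

/-!
Both sides are compared with `E[f²]`. On one side, `f² / (2ⁿ E[f²])` is a probability
distribution on `2ⁿ` points, so its Shannon entropy is at most `n log 2`, which gives
`Ent(f²) ≤ n log 2 · E[f²]`. On the other side, `(a + b)² ≥ a² + b²` for `a, b ≥ 0`, and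
every edge of the cube is counted from both of its endpoints, so `K²(f) ≥ (n / 2) · E[f²]`.
-/

open Finset Real

theorem Finset.sum_mul_log_le_sum_mul_log_sum {ι : Type*} (s : Finset ι) (w : ι → ℝ)
    (hw : ∀ i ∈ s, 0 ≤ w i) :
    ∑ i ∈ s, w i * log (w i) ≤ (∑ i ∈ s, w i) * log (∑ i ∈ s, w i) := by
  rw [sum_mul]
  refine sum_le_sum fun i hi => ?_
  rcases (hw i hi).eq_or_lt with hzero | hpos
  · simp [← hzero]
  · exact mul_le_mul_of_nonneg_left (log_le_log hpos (single_le_sum hw hi)) hpos.le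

section Cube

variable {n : ℕ}

lemma cubeE_mono {g h : (Fin n → Bool) → ℝ} (hgh : ∀ x, g x ≤ h x) : cubeE n g ≤ cubeE n h :=
  div_le_div_of_nonneg_right (sum_le_sum fun x _ => hgh x) (by positivity)

lemma cubeE_add (g h : (Fin n → Bool) → ℝ) :
    cubeE n (fun x => g x + h x) = cubeE n g + cubeE n h := by
  simp only [cubeE, sum_add_distrib, add_div]

lemma cubeE_sum {ι : Type*} (s : Finset ι) (g : ι → (Fin n → Bool) → ℝ) :
    cubeE n (fun x => ∑ i ∈ s, g i x) = ∑ i ∈ s, cubeE n (g i) := by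
  simp only [cubeE, sum_div]
  exact sum_comm

lemma cubeE_comp_flip (i : Fin n) (g : (Fin n → Bool) → ℝ) :
    cubeE n (fun x => g (Function.update x i (!x i))) = cubeE n g := by
  have hflip : Function.Involutive fun x : Fin n → Bool => Function.update x i (!x i) := by
    intro x
    simp
  simp only [cubeE]
  congr 1
  exact Fintype.sum_equiv (hflip.toPerm _) _ _ fun _ => rfl

lemma cubeEnt_le (f : (Fin n → Bool) → ℝ) :
    cubeEnt n f ≤ n * log 2 * cubeE n (fun x => f x ^ 2) := by
  set E := cubeE n (fun x => f x ^ 2)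
  set S := ∑ x : Fin n → Bool, f x ^ 2
  have hS : S = E * 2 ^ n := (div_mul_cancel₀ S (by positivity)).symm
  have hlogS : E * log S = E * log E + E * (n * log 2) := by
    rcases eq_or_ne E 0 with hE | hE
    · simp [hE]
    · rw [hS, log_mul hE (by positivity), log_pow]
      ring
  have hsum : ∑ x, f x ^ 2 * log (f x ^ 2) ≤ S * log S :=
    sum_mul_log_le_sum_mul_log_sum _ _ fun x _ => sq_nonneg (f x)
  calc cubeEnt n f = (∑ x, f x ^ 2 * log (f x ^ 2)) / 2 ^ n - E * log E := rfl
    _ ≤ S * log S / 2 ^ n - E * log E := by gcongr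
    _ = n * log 2 * E := by
      rw [hS, mul_assoc, mul_div_assoc, mul_div_cancel_left₀ _ (by positivity), ← hS, hlogS]
      ring

lemma half_mul_cubeE_sq_le_cubeK2 (f : (Fin n → Bool) → ℝ) (hf : ∀ x, 0 ≤ f x) :
    n / 2 * cubeE n (fun x => f x ^ 2) ≤ cubeK2 n f := by
  have hsq : ∀ x (i : Fin n), f x ^ 2 + f (Function.update x i (!x i)) ^ 2 ≤
      (f x + f (Function.update x i (!x i))) ^ 2 := fun x i => by
    nlinarith [mul_nonneg (hf x) (hf (Function.update x i (!x i)))]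
  calc n / 2 * cubeE n (fun x => f x ^ 2)
      = 1 / 4 * ∑ i : Fin n, (cubeE n (fun x => f x ^ 2) +
          cubeE n (fun x => f (Function.update x i (!x i)) ^ 2)) := by
        simp only [cubeE_comp_flip (g := fun x => f x ^ 2), sum_const, card_univ,
          Fintype.card_fin, nsmul_eq_mul]
        ring
    _ = 1 / 4 * cubeE n (fun x => ∑ i : Fin n,
          (f x ^ 2 + f (Function.update x i (!x i)) ^ 2)) := by
        simp only [cubeE_sum, cubeE_add]
    _ ≤ cubeK2 n f :=
        mul_le_mul_of_nonneg_left (cubeE_mono fun x => sum_le_sum fun i _ => hsq x i)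
          (by norm_num)

end Cube

theorem ent_le_two_log_two_K2_general (n : ℕ)
    (f : (Fin n → Bool) → ℝ) (hf : ∀ x, 0 ≤ f x) :
    cubeEnt n f ≤ 2 * Real.log 2 * cubeK2 n f :=
  calc cubeEnt n f ≤ n * log 2 * cubeE n (fun x => f x ^ 2) := cubeEnt_le f
    _ = 2 * log 2 * (n / 2 * cubeE n (fun x => f x ^ 2)) := by ring
    _ ≤ 2 * log 2 * cubeK2 n f :=
        mul_le_mul_of_nonneg_left (half_mul_cubeE_sq_le_cubeK2 f hf)
          (mul_nonneg zero_le_two (log_nonneg one_le_two))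

/-- For a nonnegative function `f` on `{0,1}^n`, `Ent(f²) ≤ 2·log 2·K²(f)`. -/
theorem ent_le_two_log_two_K2 (n : ℕ) (hn : 1 ≤ n)
    (f : (Fin n → Bool) → ℝ) (hf : ∀ x, 0 ≤ f x) :
    cubeEnt n f ≤ 2 * Real.log 2 * cubeK2 n f :=
  ent_le_two_log_two_K2_general n f hf
end
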